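/- arXiv:1806.02275 — 2 statements merged into one kernel-verified Lean document; each statement's English description precedes it below -/
import Mathlib

section
/- Let d ≥ 4 and let s be an integer with 3 ≤ s < (-3 + √(8d+41))/2. Then τ(d,s)_max < τ^N(d,s-1)_min, where τ(d,s)_max = (d-1)(d-s-1) + s² and τ^N(d,t)_min = (d-1)(d-t-1) + C(t,2) + 4. -/
/-!
Clearing the denominator of the binomial coefficient, `τ(d,s)_max < τ^N(d,s-1)_min` is equivalent
to `s² + 3s < 2d + 8`, i.e. to `(2s + 3)² < 8d + 41`; for `2s + 3 ≥ 0` this is the bound on `s`.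
-/

lemma sq_add_three_mul_lt_of_lt_sqrt {d s : ℤ} (hs : 0 ≤ 2 * s + 3)
    (h : (s : ℝ) < (-3 + √(8 * d + 41)) / 2) : s ^ 2 + 3 * s < 2 * d + 8 := by
  have hlt : ((2 * s + 3 : ℤ) : ℝ) < √((8 * d + 41 : ℤ) : ℝ) := by push_cast; linarith
  have hsq : (2 * s + 3) ^ 2 < 8 * d + 41 := by
    exact_mod_cast (Real.lt_sqrt (by exact_mod_cast hs)).1 hlt
  linarith

lemma Int.sub_one_mul_sub_two_ediv_two_mul_two (s : ℤ) :
    (s - 1) * (s - 2) / 2 * 2 = (s - 1) * (s - 2) := by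
  have heven := Int.even_mul_pred_self (s - 1)
  rw [sub_sub, one_add_one_eq_two] at heven
  exact Int.ediv_two_mul_two_of_even heven

theorem interval_disjointness_general (d s : ℤ) (hs : 3 ≤ s)
    (hsd : (s : ℝ) < (-3 + Real.sqrt (8 * d + 41)) / 2) :
    (d - 1) * (d - s - 1) + s ^ 2 <
      (d - 1) * (d - (s - 1) - 1) + (s - 1) * (s - 2) / 2 + 4 := by
  have key : s ^ 2 + 3 * s < 2 * d + 8 := sq_add_three_mul_lt_of_lt_sqrt (by omega) hsd
  have hchoose := Int.sub_one_mul_sub_two_ediv_two_mul_two s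
  linarith

/-- For `d ≥ 4` and `3 ≤ s < (-3 + √(8d+41))/2`, one has
`τ(d,s)_max < τ^N(d,s-1)_min`, where `τ(d,t)_max = (d-1)(d-t-1) + t²` and
`τ^N(d,t)_min = (d-1)(d-t-1) + C(t,2) + 4`. -/
theorem interval_disjointness (d s : ℤ) (hd : 4 ≤ d) (hs : 3 ≤ s)
    (hsd : (s : ℝ) < (-3 + Real.sqrt (8 * d + 41)) / 2) :
    (d - 1) * (d - s - 1) + s ^ 2 <
      (d - 1) * (d - (s - 1) - 1) + (s - 1) * (s - 2) / 2 + 4 :=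
  interval_disjointness_general d s hs hsd
end

section
/- Let h, h̃ be nonzero homogeneous polynomials in ℂ[x,y,z] and A a homogeneous polynomial. If the triples ρ_q = (x·h̃_y, y·h̃_y - d·h̃, z·h̃_y) and ρ_p = (x·h_x - d·h, y·h_x, z·h_x) satisfy ρ_q = A·ρ_p componentwise (with d > 0), then a contradiction arises; i.e., ρ_q is never a polynomial multiple of ρ_p. -/
/-!
Cancelling `z` in the third coordinate gives `h̃_y = A·h_x`; substituted into the second
coordinate this reads `y·A·h_x - d·h̃ = A·y·h_x`, i.e. `d·h̃ = 0`.
-/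

open MvPolynomial

namespace MvPolynomial

variable {σ R : Type*} [CommRing R] [IsDomain R] {c : R} {h ht A : MvPolynomial σ R} {i j k : σ}

theorem pderiv_eq_mul_pderiv_of_X_mul (h3 : X k * pderiv j ht = A * (X k * pderiv i h)) :
    pderiv j ht = A * pderiv i h :=
  mul_left_cancel₀ (X_ne_zero k) (by rw [h3]; ring)

theorem eq_zero_of_X_mul_pderiv_sub_smul_eq (hc : c ≠ 0)
    (h2 : X j * pderiv j ht - c • ht = A * (X j * pderiv i h))
    (h3 : X k * pderiv j ht = A * (X k * pderiv i h)) : ht = 0 := by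
  have hcht : c • ht = 0 := by
    linear_combination -h2 + X j * pderiv_eq_mul_pderiv_of_X_mul h3
  exact (smul_eq_zero.mp hcht).resolve_left hc

end MvPolynomial

theorem rho_q_not_multiple_of_rho_p_general (d : ℕ) (hd : 0 < d)
    (h ht A : MvPolynomial (Fin 3) ℂ) (hht : ht ≠ 0)
    (h2 : X 1 * pderiv 1 ht - (d : ℂ) • ht = A * (X 1 * pderiv 0 h))
    (h3 : X 2 * pderiv 1 ht = A * (X 2 * pderiv 0 h)) :
    False :=
  hht (eq_zero_of_X_mul_pderiv_sub_smul_eq (Nat.cast_ne_zero.mpr hd.ne') h2 h3)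

/-- Lemma 2.2: for nonzero (homogeneous) `h, h̃` in `ℂ[x,y,z]` and `d > 0`, the
syzygy `ρ_q = (x·h̃_y, y·h̃_y - d·h̃, z·h̃_y)` is never a polynomial multiple
`A·ρ_p` of `ρ_p = (x·h_x - d·h, y·h_x, z·h_x)`. -/
theorem rho_q_not_multiple_of_rho_p (d : ℕ) (hd : 0 < d)
    (h ht A : MvPolynomial (Fin 3) ℂ) (hh : h ≠ 0) (hht : ht ≠ 0)
    (hhhom : ∃ k, h.IsHomogeneous k) (hthom : ∃ k, ht.IsHomogeneous k)
    (hAhom : ∃ k, A.IsHomogeneous k)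
    (h1 : X 0 * pderiv 1 ht = A * (X 0 * pderiv 0 h - (d : ℂ) • h))
    (h2 : X 1 * pderiv 1 ht - (d : ℂ) • ht = A * (X 1 * pderiv 0 h))
    (h3 : X 2 * pderiv 1 ht = A * (X 2 * pderiv 0 h)) :
    False :=
  rho_q_not_multiple_of_rho_p_general d hd h ht A hht h2 h3
end
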